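/- (Lemma 1, two-distribution version for source and target.) Let X be a separable metric space, and let μₛ (source) and μₜ (target) be Borel probability measures on X whose topological supports satisfy supp(μₜ) ⊆ supp(μₛ). Then for μₜ-almost every target point x̃, and for almost every sequence ω : ℕ → X with respect to the countable product measure μₛ^⊗ℕ (an infinite i.i.d. sample from the source distribution), the nearest-neighbor distance min over i ∈ {0, 1, …, n} of dist(ω(i), x̃) tends to 0 as n → ∞. -/

import Mathlib

/-!
Every ball around a point of `supp μₜ ⊆ supp μₛ` has positive `μₛ`-mass `p`, so the first `n`
samples all miss it with probability `(1 - p) ^ n → 0`; almost surely some sample lands in each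
ball of radius `1 / (k + 1)`, and the running minimum of the distances then tends to `0`.
Separability is what makes the complement of `supp μₜ` a `μₜ`-null set.
-/

open MeasureTheory Metric Filter

theorem tendsto_inf'_range_nhds_zero {f : ℕ → ℝ} (hf_nonneg : ∀ i, 0 ≤ f i)
    (hf : ∀ ε > 0, ∃ i, f i < ε) :
    Tendsto (fun n ↦ (Finset.range (n + 1)).inf' Finset.nonempty_range_add_one f)
      atTop (nhds 0) := by
  refine tendsto_order.2 ⟨fun a ha ↦ .of_forall fun n ↦ ?_, fun ε hε ↦ ?_⟩
  · exact ha.trans_le (Finset.le_inf' _ _ fun i _ ↦ hf_nonneg i)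
  · obtain ⟨i, hi⟩ := hf ε hε
    filter_upwards [eventually_ge_atTop i] with n hn
    exact (Finset.inf'_le _ (Finset.mem_range.2 (Nat.lt_succ_of_le hn))).trans_lt hi

namespace MeasureTheory.Measure

theorem support_eq_setOf_forall_isOpen {X : Type*} [TopologicalSpace X] [MeasurableSpace X]
    (μ : Measure X) : μ.support = {x | ∀ U : Set X, IsOpen U → x ∈ U → 0 < μ U} := by
  ext x
  simp only [(nhds_basis_opens x).mem_measureSupport, Set.mem_ofPred_eq, and_imp]
  exact forall_congr' fun U ↦ Imp.swap

end MeasureTheory.Measure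

section IIDSample

variable {X : Type*} [MeasurableSpace X]

def IsIIDProduct (μ : Measure X) (ν : Measure (ℕ → X)) : Prop :=
  ∀ (t : Finset ℕ) (s : ℕ → Set X), (∀ i ∈ t, MeasurableSet (s i)) →
    ν {ω : ℕ → X | ∀ i ∈ t, ω i ∈ s i} = ∏ i ∈ t, μ (s i)

variable {μ : Measure X} {ν : Measure (ℕ → X)}

theorem measure_forall_mem_le_pow (hν : IsIIDProduct μ ν) {s : Set X} (hs : MeasurableSet s)
    (n : ℕ) :
    ν {ω : ℕ → X | ∀ i, ω i ∈ s} ≤ μ s ^ n :=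
  calc ν {ω : ℕ → X | ∀ i, ω i ∈ s}
      ≤ ν {ω : ℕ → X | ∀ i ∈ Finset.range n, ω i ∈ s} := measure_mono fun ω hω i _ ↦ hω i
    _ = μ s ^ n := by rw [hν _ (fun _ ↦ s) fun _ _ ↦ hs, Finset.prod_const, Finset.card_range]

theorem measure_forall_mem_eq_zero (hν : IsIIDProduct μ ν) {s : Set X} (hs : MeasurableSet s)
    (hμs : μ s < 1) :
    ν {ω : ℕ → X | ∀ i, ω i ∈ s} = 0 :=
  le_antisymm (ge_of_tendsto' (ENNReal.tendsto_pow_atTop_nhds_zero_of_lt_one hμs)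
    (measure_forall_mem_le_pow hν hs)) bot_le

theorem ae_exists_mem_of_measure_pos [IsProbabilityMeasure μ] (hν : IsIIDProduct μ ν)
    {s : Set X} (hs : MeasurableSet s) (hμs : 0 < μ s) :
    ∀ᵐ ω ∂ν, ∃ i, ω i ∈ s := by
  have hμsc : μ sᶜ < 1 := by
    rw [prob_compl_eq_one_sub hs]
    exact ENNReal.sub_lt_self ENNReal.one_ne_top one_ne_zero hμs.ne'
  rw [ae_iff]
  simpa only [not_exists, Set.mem_compl_iff] using measure_forall_mem_eq_zero hν hs.compl hμsc

theorem ae_exists_dist_lt_of_mem_support [PseudoMetricSpace X] [OpensMeasurableSpace X]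
    [IsProbabilityMeasure μ] (hν : IsIIDProduct μ ν) {x : X} (hx : x ∈ μ.support) :
    ∀ᵐ ω ∂ν, ∀ ε > 0, ∃ i, dist (ω i) x < ε := by
  have hball : ∀ k : ℕ, ∀ᵐ ω ∂ν, ∃ i, ω i ∈ ball x (1 / ((k : ℝ) + 1)) := fun k ↦
    ae_exists_mem_of_measure_pos hν measurableSet_ball
      ((Measure.mem_support_iff_forall x).1 hx _ (ball_mem_nhds x Nat.one_div_pos_of_nat))
  filter_upwards [ae_all_iff.2 hball] with ω hω ε hε
  obtain ⟨k, hk⟩ := exists_nat_one_div_lt hε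
  obtain ⟨i, hi⟩ := hω k
  exact ⟨i, (mem_ball.1 hi).trans hk⟩

end IIDSample

/-- (Lemma 1, two-distribution version.) Let `μs` (source) and `μt` (target) be Borel
probability measures on a separable metric space `X` whose topological supports satisfy
`supp(μt) ⊆ supp(μs)` (the support of a measure being the set of points all of whose open
neighborhoods have positive measure). Let `ν` be the countable product measure `μs^⊗ℕ` on
sequences `ℕ → X` (an infinite i.i.d. sample from the source distribution), characterized
by its values on measurable cylinder sets. Then for `μt`-almost every target point `x₀`
and `ν`-almost every sequence `ω`, the nearest-neighbor distance
`min_{i ≤ n} dist (ω i) x₀` tends to `0` as `n → ∞`. -/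
theorem nearest_neighbor_dist_tendsto_zero_two_distributions
    {X : Type*} [MetricSpace X] [TopologicalSpace.SeparableSpace X]
    [MeasurableSpace X] [BorelSpace X]
    (μs μt : Measure X) [IsProbabilityMeasure μs]
    (hsupp : {x : X | ∀ U : Set X, IsOpen U → x ∈ U → 0 < μt U} ⊆
      {x : X | ∀ U : Set X, IsOpen U → x ∈ U → 0 < μs U})
    (ν : Measure (ℕ → X))
    (hν : ∀ (t : Finset ℕ) (s : ℕ → Set X), (∀ i ∈ t, MeasurableSet (s i)) →
      ν {ω : ℕ → X | ∀ i ∈ t, ω i ∈ s i} = ∏ i ∈ t, μs (s i)) :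
    ∀ᵐ x₀ ∂μt, ∀ᵐ ω ∂ν,
      Tendsto
        (fun n : ℕ =>
          (Finset.range (n + 1)).inf' (by simp) (fun i => dist (ω i) x₀))
        atTop (nhds 0) := by
  have : SecondCountableTopology X := UniformSpace.secondCountable_of_separable X
  rw [← μt.support_eq_setOf_forall_isOpen, ← μs.support_eq_setOf_forall_isOpen] at hsupp
  filter_upwards [Measure.support_mem_ae] with x₀ hx₀
  filter_upwards [ae_exists_dist_lt_of_mem_support hν (hsupp hx₀)] with ω hω
  exact tendsto_inf'_range_nhds_zero (fun _ ↦ dist_nonneg) hω
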